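/- Let (I, I_co) be a generalised inference system with rules I and corules I_co over a universe U, and let Ind(I ∪ I_co) denote the inductive interpretation of the union system. If a set X ⊆ U is I-consistent (every judgement in X is the conclusion of some rule in I whose premises are all in X) and X ⊆ Ind(I ∪ I_co), then X is contained in the interpretation of (I, I_co), i.e., every judgement in X has a (possibly infinite) derivation in I all of whose nodes have a well-founded derivation in I ∪ I_co. -/

import Mathlib

/-- An inference system over a universe `U` is a set of rules `(P, c)` with a
    set of premises `P ⊆ U` and a conclusion `c ∈ U`. `X` is closed if it is
    closed under all rules. -/
def RuleClosed {U : Type} (I : Set (Set U × U)) (X : Set U) : Prop :=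
  ∀ P c, (P, c) ∈ I → P ⊆ X → c ∈ X

/-- `X` is consistent: every judgement of `X` is the conclusion of a rule whose
    premises are all in `X`. -/
def RuleConsistent {U : Type} (I : Set (Set U × U)) (X : Set U) : Prop :=
  ∀ c ∈ X, ∃ (P : Set U), (P, c) ∈ I ∧ P ⊆ X

/-- Inductive interpretation: the least closed subset. -/
def IndInterp {U : Type} (I : Set (Set U × U)) : Set U := ⋂₀ {X | RuleClosed I X}

/-- Coinductive interpretation: the largest consistent subset. -/
def CoIndInterp {U : Type} (I : Set (Set U × U)) : Set U := ⋃₀ {X | RuleConsistent I X}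

/-- The restriction of `I` to rules with conclusion in `X`. -/
def RestrictTo {U : Type} (I : Set (Set U × U)) (X : Set U) : Set (Set U × U) :=
  {r ∈ I | r.2 ∈ X}

/-- Interpretation of the generalised inference system `(I, Ico)`:
    judgements with a (possibly infinite) derivation in `I` all of whose nodes
    have a well-founded derivation in `I ∪ Ico`. -/
def GenInterp {U : Type} (I Ico : Set (Set U × U)) : Set U :=
  CoIndInterp (RestrictTo I (IndInterp (I ∪ Ico)))

theorem RuleConsistent.subset_coIndInterp {U : Type} {I : Set (Set U × U)} {X : Set U}
    (h : RuleConsistent I X) : X ⊆ CoIndInterp I :=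
  Set.subset_sUnion_of_mem h

theorem RuleConsistent.restrictTo {U : Type} {I : Set (Set U × U)} {X Y : Set U}
    (h : RuleConsistent I X) (hXY : X ⊆ Y) : RuleConsistent (RestrictTo I Y) X := by
  intro c hc
  obtain ⟨P, hP, hPX⟩ := h c hc
  exact ⟨P, ⟨hP, hXY hc⟩, hPX⟩

theorem bounded_coinduction {U : Type} (I Ico : Set (Set U × U)) (X : Set U)
    (hcons : RuleConsistent I X) (hbound : X ⊆ IndInterp (I ∪ Ico)) :
    X ⊆ GenInterp I Ico := by
  exact (hcons.restrictTo hbound).subset_coIndInterp
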